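/- arXiv:2504.00215 — 2 statements merged into one kernel-verified Lean document; each statement's English description precedes it below -/
import Mathlib

section
/- Let V be a ℚ-vector space with basis {e_n}_{n ∈ ℤ} indexed by the integers, and for each n ∈ ℤ set f_n = e_n − 2 e_{n+1} + e_{n+2}. Then the family {f_n}_{n ∈ ℤ} is linearly independent and its span is a vector-space complement to the span of {e₀, e₁} in V. -/
/-!
The functional `φ m` sending `e j` to `max (j - m - 1) 0` takes the second difference of a ramp,
which is the Kronecker delta at its kink, so `φ m (f n) = δ n m` and the `f n` are independent.
The map `e j ↦ (1, j) ∈ R × R` kills every second difference and is injective on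
`span {e 0, e 1}`, giving disjointness; conversely the recursion
`e (n + 2) = f n - e n + 2 e (n + 1)`, run in both directions from `e 0, e 1`, shows that the
two spans together contain every `e n`.
-/

open Submodule

section

variable {R M : Type*} [CommRing R] [AddCommGroup M] [Module R M]

theorem Int.toNat_sub_one_sub_two_mul_toNat_add_toNat_add_one (k : ℤ) :
    ((k - 1).toNat : R) - 2 * k.toNat + (k + 1).toNat = if k = 0 then 1 else 0 := by
  rcases lt_trichotomy k 0 with hk | rfl | hk
  · simp [Int.toNat_eq_zero.mpr hk.le, Int.toNat_eq_zero.mpr (by omega : k - 1 ≤ 0),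
      Int.toNat_eq_zero.mpr (by omega : k + 1 ≤ 0), hk.ne]
  · simp
  · have hcast : ∀ x : ℤ, 0 ≤ x → (x.toNat : R) = x := fun x hx ↦ by
      rw [← Int.cast_natCast, Int.toNat_of_nonneg hx]
    rw [hcast _ (by omega), hcast _ hk.le, hcast _ (by omega), if_neg hk.ne']
    push_cast
    ring

theorem Submodule.mem_of_secondDiff_mem {e : ℤ → M} {K : Submodule R M}
    (h0 : e 0 ∈ K) (h1 : e 1 ∈ K) (hK : ∀ n, e n - (2 : R) • e (n + 1) + e (n + 2) ∈ K)
    (n : ℤ) : e n ∈ K := by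
  suffices ∀ n : ℤ, e n ∈ K ∧ e (n + 1) ∈ K from (this n).1
  intro n
  induction n using Int.induction_on with
  | zero => exact ⟨h0, h1⟩
  | succ k ih =>
    refine ⟨ih.2, ?_⟩
    convert K.add_mem (K.sub_mem (hK k) ih.1) (K.smul_mem 2 ih.2) using 1
    rw [add_assoc, one_add_one_eq_two]
    abel
  | pred k ih =>
    refine ⟨?_, by simpa using ih.1⟩
    have hK' := hK (-k - 1)
    rw [sub_add_cancel, show -(k : ℤ) - 1 + 2 = -k + 1 by ring] at hK'
    convert K.sub_mem (K.add_mem hK' (K.smul_mem 2 ih.1)) ih.2 using 1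
    abel

section Basis

variable (e : Module.Basis ℤ R M) {f : ℤ → M}

theorem linearIndependent_of_eq_secondDiff_basis
    (hf : ∀ n, f n = e n - (2 : R) • e (n + 1) + e (n + 2)) : LinearIndependent R f := by
  let φ : ℤ → M →ₗ[R] R := fun m ↦ e.constr R fun j ↦ ((j - m - 1).toNat : R)
  have hφ : ∀ m n, φ m (f n) = if n - m = 0 then 1 else 0 := by
    intro m n
    rw [← Int.toNat_sub_one_sub_two_mul_toNat_add_toNat_add_one, hf]
    simp only [φ, map_add, map_sub, map_smul, Module.Basis.constr_basis, smul_eq_mul]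
    ring_nf
  refine .of_pairwise_dual_eq_zero_one f φ (fun m n hmn ↦ ?_) (fun m ↦ by simp [hφ])
  simp [hφ, sub_eq_zero, Ne.symm hmn]

theorem disjoint_span_range_of_eq_secondDiff_basis
    (hf : ∀ n, f n = e n - (2 : R) • e (n + 1) + e (n + 2)) :
    Disjoint (span R (Set.range f)) (span R {e 0, e 1}) := by
  let T : M →ₗ[R] R × R := e.constr R fun j ↦ (1, (j : R))
  have hT : span R (Set.range f) ≤ LinearMap.ker T := by
    rw [span_le]
    rintro _ ⟨n, rfl⟩
    simp only [SetLike.mem_coe, LinearMap.mem_ker, hf, map_add, map_sub, map_smul,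
      Module.Basis.constr_basis, T]
    ext <;> simp <;> ring
  rw [disjoint_def]
  intro x hxf hxe
  obtain ⟨a, b, rfl⟩ := mem_span_pair.mp hxe
  have hab : (a + b, b) = (0, 0) := by simpa [T] using hT hxf
  simp only [Prod.mk.injEq] at hab
  simp [hab.2, show a = 0 by linear_combination hab.1 - hab.2]

theorem codisjoint_span_range_of_eq_secondDiff_basis
    (hf : ∀ n, f n = e n - (2 : R) • e (n + 1) + e (n + 2)) :
    Codisjoint (span R (Set.range f)) (span R {e 0, e 1}) := by
  rw [codisjoint_iff, eq_top_iff, ← e.span_eq, span_le]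
  rintro _ ⟨n, rfl⟩
  refine mem_of_secondDiff_mem (mem_sup_right (subset_span (by simp)))
    (mem_sup_right (subset_span (by simp))) (fun n ↦ ?_) n
  exact hf n ▸ mem_sup_left (subset_span ⟨n, rfl⟩)

end Basis

end

theorem fn_linearIndependent_and_complement (V : Type*) [AddCommGroup V] [Module ℚ V]
    (e : Module.Basis ℤ ℚ V) (f : ℤ → V)
    (hf : ∀ n : ℤ, f n = e n - (2 : ℚ) • e (n + 1) + e (n + 2)) :
    LinearIndependent ℚ f ∧
      IsCompl (Submodule.span ℚ (Set.range f)) (Submodule.span ℚ {e 0, e 1}) :=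
  ⟨linearIndependent_of_eq_secondDiff_basis e hf,
    disjoint_span_range_of_eq_secondDiff_basis e hf,
    codisjoint_span_range_of_eq_secondDiff_basis e hf⟩
end

section
/- Let A be a free abelian group of rank 2 with basis a, b, let V be a ℚ-vector space, and let Y : A × {a, b} → V be a function satisfying, for all h ∈ A, the relation Y(h,a) − 2Y(h+b,a) + Y(h+2b,a) = Y(h,b) − 2Y(h+a,b) + Y(h+2a,b). Then the span of all values Y(h,x) (h ∈ A, x ∈ {a,b}) equals the span of the set consisting of all Y(h,a) for h ∈ A together with all Y(h,b) for those h ∈ A whose a-coordinate is 0 or 1. -/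
/-!
For fixed `m`, the relation says that `n ↦ Y((n, m), b)` satisfies the recurrence
`f n - 2 f (n + 1) + f (n + 2) = (a second difference of Y(·, a))`, whose right-hand side already
lies in the smaller span. Since the outer coefficients are `1`, the recurrence can be run both
forwards and backwards from the two initial values at `n = 0, 1`.
-/

theorem Submodule.mem_of_linearRecurrence_of_mem_zero_one {R M : Type*} [Ring R]
    [AddCommGroup M] [Module R M] (S : Submodule R M) (f : ℤ → M) (c : R)
    (hrec : ∀ n, f n + c • f (n + 1) + f (n + 2) ∈ S) (h₀ : f 0 ∈ S) (h₁ : f 1 ∈ S)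
    (n : ℤ) : f n ∈ S := by
  suffices ∀ n, f n ∈ S ∧ f (n + 1) ∈ S from (this n).1
  intro n
  induction n using Int.induction_on with
  | zero => exact ⟨h₀, by simpa using h₁⟩
  | succ n ih =>
    have forward : f (n + 2) = (f n + c • f (n + 1) + f (n + 2)) - f n - c • f (n + 1) := by
      abel
    refine ⟨ih.2, ?_⟩
    rw [add_assoc, one_add_one_eq_two, forward]
    exact S.sub_mem (S.sub_mem (hrec n) ih.1) (S.smul_mem c ih.2)
  | pred n ih =>
    have backward :
        f (-n - 1) = (f (-n - 1) + c • f (-n) + f (-n + 1)) - c • f (-n) - f (-n + 1) := by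
      abel
    have hrec' := hrec (-n - 1)
    rw [sub_add_cancel, show -(n : ℤ) - 1 + 2 = -n + 1 by ring] at hrec'
    refine ⟨?_, by simpa using ih.1⟩
    rw [backward]
    exact S.sub_mem (S.sub_mem hrec' (S.smul_mem c ih.1)) ih.2

/-- `A = ℤ × ℤ` with basis `a = (1,0)`, `b = (0,1)`; `Ya h` stands for `Y(h,a)` and
`Yb h` for `Y(h,b)`.  The `a`-coordinate of `h` is `h.1`. -/
theorem span_Y_reduction (V : Type*) [AddCommGroup V] [Module ℚ V]
    (Ya Yb : ℤ × ℤ → V)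
    (hrel : ∀ h : ℤ × ℤ,
      Ya h - (2 : ℚ) • Ya (h + (0, 1)) + Ya (h + (0, 2))
        = Yb h - (2 : ℚ) • Yb (h + (1, 0)) + Yb (h + (2, 0))) :
    Submodule.span ℚ (Set.range Ya ∪ Set.range Yb)
      = Submodule.span ℚ (Set.range Ya ∪ (Yb '' {h : ℤ × ℤ | h.1 = 0 ∨ h.1 = 1})) := by
  set S := Submodule.span ℚ (Set.range Ya ∪ (Yb '' {h : ℤ × ℤ | h.1 = 0 ∨ h.1 = 1}))
  have hYa (h : ℤ × ℤ) : Ya h ∈ S := Submodule.subset_span (Or.inl ⟨h, rfl⟩)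
  have hYb (h : ℤ × ℤ) (hh : h.1 = 0 ∨ h.1 = 1) : Yb h ∈ S :=
    Submodule.subset_span (Or.inr ⟨h, hh, rfl⟩)
  have hrec (m n : ℤ) : Yb (n, m) + (-2 : ℚ) • Yb (n + 1, m) + Yb (n + 2, m) ∈ S := by
    have h := hrel (n, m)
    simp only [Prod.mk_add_mk, add_zero, neg_smul, ← sub_eq_add_neg] at h ⊢
    rw [← h]
    exact S.add_mem (S.sub_mem (hYa _) (S.smul_mem _ (hYa _))) (hYa _)
  refine le_antisymm (Submodule.span_le.mpr ?_)
    (Submodule.span_mono (Set.union_subset_union_right _ (Set.image_subset_range _ _)))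
  rintro _ (⟨h, rfl⟩ | ⟨⟨n, m⟩, rfl⟩)
  · exact hYa h
  · exact S.mem_of_linearRecurrence_of_mem_zero_one (fun n ↦ Yb (n, m)) (-2) (hrec m)
      (hYb _ (Or.inl rfl)) (hYb _ (Or.inr rfl)) n
end
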